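/- If Ω_{t+1}^{n+1} > 0 then the smallest maximizer satisfies ℓ_{t+1}^{n+1} = ℓ_t^n + 1; if Ω_{t+1}^{n+1} = 0 then ℓ_{t+1}^{n+1} = 0. -/

import Mathlib

/-!
Shifting the time by one turns the partial sums into `a_{t+1,k+1} = a_{t,k} + (c_t - ρ C̄)`,
so on `1 ≤ k ≤ n + 1` the profile `k ↦ a_{t+1,k}` is a translate of `k ↦ a_{t,k-1}` on
`0 ≤ k - 1 ≤ n`, and its maximizers there are those of `a_{t,·}` shifted by one.
A positive maximum cannot be attained at `k = 0`, where `a_{t+1,0} = 0`;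
a zero maximum is attained at `k = 0`, which is then the smallest maximizer.
-/

/-- a_{t,k} := ∑_{i=1}^k (c_{t-i} - ρ·C̄). -/
noncomputable def a (c : ℕ → ℝ) (ρ Cb : ℝ) (t k : ℕ) : ℝ :=
  ∑ i ∈ Finset.Icc 1 k, (c (t - i) - ρ * Cb)

/-- Ω_t^n := max_{0 ≤ k ≤ n} a_{t,k}. -/
noncomputable def Omega (c : ℕ → ℝ) (ρ Cb : ℝ) (t n : ℕ) : ℝ :=
  (Finset.range (n + 1)).sup' (Finset.nonempty_range_iff.mpr (Nat.succ_ne_zero n))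
    (fun k => a c ρ Cb t k)

/-- ℓ is the smallest maximizer of a_{t,k} over 0 ≤ k ≤ n. -/
def IsSmallestArgmax (c : ℕ → ℝ) (ρ Cb : ℝ) (t n ℓ : ℕ) : Prop :=
  ℓ ≤ n ∧ a c ρ Cb t ℓ = Omega c ρ Cb t n ∧
    ∀ k, k ≤ n → a c ρ Cb t k = Omega c ρ Cb t n → ℓ ≤ k

section

variable (c : ℕ → ℝ) (ρ Cb : ℝ)

lemma a_zero_right (t : ℕ) : a c ρ Cb t 0 = 0 := by
  simp [a]

lemma a_succ_right (t k : ℕ) : a c ρ Cb t (k + 1) = a c ρ Cb t k + (c (t - (k + 1)) - ρ * Cb) :=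
  Finset.sum_Icc_succ_top (Nat.le_add_left 1 k) _

lemma a_succ_succ (t k : ℕ) : a c ρ Cb (t + 1) (k + 1) = a c ρ Cb t k + (c t - ρ * Cb) := by
  induction k with
  | zero => simp [a]
  | succ k ih =>
    rw [a_succ_right, ih, a_succ_right, Nat.add_sub_add_right]
    ring

variable {c ρ Cb}

lemma a_le_Omega {t n k : ℕ} (hk : k ≤ n) : a c ρ Cb t k ≤ Omega c ρ Cb t n :=
  Finset.le_sup' (fun k => a c ρ Cb t k) (Finset.mem_range_succ_iff.mpr hk)

namespace IsSmallestArgmax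

variable {t n ℓ : ℕ}

lemma eq_zero_of_Omega_eq_zero (h : IsSmallestArgmax c ρ Cb t n ℓ)
    (h0 : Omega c ρ Cb t n = 0) : ℓ = 0 :=
  Nat.le_zero.mp (h.2.2 0 n.zero_le (by rw [a_zero_right, h0]))

lemma ne_zero_of_Omega_pos (h : IsSmallestArgmax c ρ Cb t n ℓ)
    (hpos : 0 < Omega c ρ Cb t n) : ℓ ≠ 0 := by
  rintro rfl
  have h0 := h.2.1
  rw [a_zero_right] at h0
  exact hpos.ne h0

lemma eq_of_succ (h : IsSmallestArgmax c ρ Cb t n ℓ) {m : ℕ}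
    (h' : IsSmallestArgmax c ρ Cb (t + 1) (n + 1) (m + 1)) : m = ℓ := by
  obtain ⟨hℓn, hℓ, hℓmin⟩ := h
  obtain ⟨hm_le, hm, hmmin⟩ := h'
  rw [a_succ_succ] at hm
  have hmn : m ≤ n := by omega
  have hshift : a c ρ Cb (t + 1) (ℓ + 1) ≤ Omega c ρ Cb (t + 1) (n + 1) :=
    a_le_Omega (by omega)
  rw [a_succ_succ] at hshift
  have hm_max : a c ρ Cb t m = Omega c ρ Cb t n :=
    le_antisymm (a_le_Omega hmn) (by linarith)
  have hℓ_max : a c ρ Cb (t + 1) (ℓ + 1) = Omega c ρ Cb (t + 1) (n + 1) := by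
    rw [a_succ_succ, hℓ, ← hm, hm_max]
  have hℓm : ℓ ≤ m := hℓmin m hmn hm_max
  have hmℓ : m + 1 ≤ ℓ + 1 := hmmin (ℓ + 1) (by omega) hℓ_max
  omega

end IsSmallestArgmax

end

theorem stmt_2_general (c : ℕ → ℝ) (ρ Cb : ℝ)
    (t n : ℕ) (ℓtn ℓt1n1 : ℕ)
    (h1 : IsSmallestArgmax c ρ Cb t n ℓtn)
    (h2 : IsSmallestArgmax c ρ Cb (t + 1) (n + 1) ℓt1n1) :
    (0 < Omega c ρ Cb (t + 1) (n + 1) → ℓt1n1 = ℓtn + 1) ∧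
    (Omega c ρ Cb (t + 1) (n + 1) = 0 → ℓt1n1 = 0) := by
  refine ⟨fun hpos => ?_, h2.eq_zero_of_Omega_eq_zero⟩
  obtain ⟨m, rfl⟩ := Nat.exists_eq_succ_of_ne_zero (h2.ne_zero_of_Omega_pos hpos)
  rw [h1.eq_of_succ h2]

theorem stmt_2 (c : ℕ → ℝ) (ρ Cb : ℝ) (hρ : ρ ∈ Set.Icc (0:ℝ) 1) (hCb : 0 < Cb)
    (t n : ℕ) (hn : n ≤ t) (ℓtn ℓt1n1 : ℕ)
    (h1 : IsSmallestArgmax c ρ Cb t n ℓtn)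
    (h2 : IsSmallestArgmax c ρ Cb (t + 1) (n + 1) ℓt1n1) :
    (0 < Omega c ρ Cb (t + 1) (n + 1) → ℓt1n1 = ℓtn + 1) ∧
    (Omega c ρ Cb (t + 1) (n + 1) = 0 → ℓt1n1 = 0) :=
  stmt_2_general c ρ Cb t n ℓtn ℓt1n1 h1 h2
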